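/- Uniform convergence of sample extremal depth (Proposition 2): Assume: (i) P*{x : d_x = 0} = 0 and (P⊗P)*{(x,y) : d_x = d_y and x ≠ y} = 0; (ii) with C_n the number of points t ∈ I at which X_i(t) = X_j(t) for some 1 ≤ i < j ≤ n (assumed finite almost surely), for every ε > 0 one has ℙ[C_n ≥ exp(εn)] → 0 as n → ∞; (iii) for every u₀ ∈ ℝ there exists ε > 0 such that sup{|F_t(u) − F_s(u)| : t,s ∈ I, |t−s| ≤ δ, |u−u₀| < ε} → 0 as δ → 0⁺, where F_t(y) := P{x : x(t) ≤ y}; (iv) sup{|P_n(A) − P(A)| : A ⊆ C(I,ℝ) convex and Borel} → 0 ℙ-almost surely. Then sup_{f ∈ C(I,ℝ)} |ED(f,P_n) − ED(f,P)| → 0 in outer probability: for every ε > 0, ℙ*[sup_{f ∈ C(I,ℝ)} |ED(f,P_n) − ED(f,P)| > ε] → 0 as n → ∞. -/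

import Mathlib

open MeasureTheory Set Filter
open scoped NNReal ENNReal symmDiff

noncomputable section

/-- The space `C(I, ℝ)` of continuous real-valued functions on `I = [0,1]`,
equipped with the sup metric. -/
abbrev FSp := C(unitInterval, ℝ)

/-- Borel σ-algebra on `C(I, ℝ)`. -/
instance : MeasurableSpace FSp := borel FSp
instance : BorelSpace FSp := ⟨rfl⟩

/-- Pointwise depth `D_g(t) = 1 - |P{x : x(t) > g(t)} - P{x : x(t) < g(t)}|`. -/
def pdepth (P : Measure FSp) (g : unitInterval → ℝ) (t : unitInterval) : ℝ :=
  1 - |(P {x : FSp | g t < x t}).toReal - (P {x : FSp | x t < g t}).toReal|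

/-- Depth CDF (d-CDF) `Φ_g(r) = Leb{t ∈ I : D_g(t) ≤ r}`. -/
def dcdf (P : Measure FSp) (g : unitInterval → ℝ) (r : ℝ) : ℝ :=
  (volume {t : unitInterval | pdepth P g t ≤ r}).toReal

/-- The set `R(g,h) = {r ∈ [0,1] : Φ_g(r) ≠ Φ_h(r)}`. -/
def Rset (P : Measure FSp) (g h : unitInterval → ℝ) : Set ℝ :=
  {r ∈ Icc (0:ℝ) 1 | dcdf P g r ≠ dcdf P h r}

/-- `g ≺ h`: `g` is more extreme than `h`, i.e. `R(g,h)` is nonempty and, with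
`r* = inf R(g,h)`, there is `δ > 0` with `Φ_g(r) > Φ_h(r)` for all
`r ∈ (r*, r*+δ) ∩ [0,1]`.  `g ⪰ h` is `¬ prec P g h`. -/
def prec (P : Measure FSp) (g h : unitInterval → ℝ) : Prop :=
  (Rset P g h).Nonempty ∧
  ∃ δ > 0, ∀ r ∈ Ioo (sInf (Rset P g h)) (sInf (Rset P g h) + δ) ∩ Icc (0:ℝ) 1,
    dcdf P h r < dcdf P g r

/-- Extremal depth `ED(g,P) = P*{x ∈ C(I,ℝ) : g ⪰ x}` (a measure applied to an
arbitrary set is the induced outer measure). -/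
def ed (P : Measure FSp) (g : unitInterval → ℝ) : ℝ :=
  (P {x : FSp | ¬ prec P g ⇑x}).toReal

/-- Minimal depth level `d_f = inf{r ∈ [0,1] : Φ_f(r) > 0}`. -/
def dmin (P : Measure FSp) (f : unitInterval → ℝ) : ℝ :=
  sInf {r ∈ Icc (0:ℝ) 1 | 0 < dcdf P f r}

/-- Marginal CDF `F_t(y) = P{x : x(t) ≤ y}`. -/
def margF (P : Measure FSp) (t : unitInterval) (y : ℝ) : ℝ :=
  (P {x : FSp | x t ≤ y}).toReal

/-- Pointwise quantile function `q_a(t) = inf{y : F_t(y) ≥ a}`. -/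
def quant (P : Measure FSp) (a : ℝ) (t : unitInterval) : ℝ :=
  sInf {y : ℝ | a ≤ margF P t y}

/-- Lower envelope `f_L(t) = inf{f(t) : f ∈ C(I,ℝ), ED(f,P) > α}`. -/
def envL (P : Measure FSp) (α : ℝ) (t : unitInterval) : ℝ :=
  sInf ((fun f : FSp => f t) '' {f : FSp | α < ed P ⇑f})

/-- Upper envelope `f_U(t) = sup{f(t) : f ∈ C(I,ℝ), ED(f,P) > α}`. -/
def envU (P : Measure FSp) (α : ℝ) (t : unitInterval) : ℝ :=
  sSup ((fun f : FSp => f t) '' {f : FSp | α < ed P ⇑f})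

/-- The `(1-α)` extremal-depth central region `C_{1-α}`. -/
def centralRegion (P : Measure FSp) (α : ℝ) : Set FSp :=
  {x : FSp | ∀ t, envL P α t ≤ x t ∧ x t ≤ envU P α t}

/-- Boundary `∂C_{1-α}` of the central region. -/
def centralBoundary (P : Measure FSp) (α : ℝ) : Set FSp :=
  {x ∈ centralRegion P α | ∃ t, x t = envL P α t ∨ x t = envU P α t}

open Topology

/-!
A smaller minimal depth level makes a function more extreme, so for every measure `Q`
`Q{x : d_x < d_f} ≤ ED(f, Q) ≤ Q{x : d_x ≤ d_f}`. Two independent sample paths differ almost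
surely (they would otherwise cross everywhere), so (i) makes `d_x` atomless under `P`; hence
`ED(f, P) = G(d_f)` with `G(c) = P{x : d_x ≤ c}` continuous, and even uniformly continuous since
`d_x ∈ [0, 1]`.

If `P_n` and `P` are `η`-close on all half-spaces `{x(t) > u}`, `{x(t) < u}`, pointwise depths
move by at most `2η`, hence so does every `d_f`, and `ED(f, P_n)` is squeezed between
`P_n{x : d_x ≤ d_f ± O(η)}` (depths `d` taken under `P`). The strong law makes these empirical
distribution functions close to `G` on a finite grid, and uniform continuity of `G` gives the
bound uniformly in `f`. Closeness on half-spaces holds, eventually and almost surely, on the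
countable family of rational levels and times from a dense sequence by (iv), half-spaces being
convex; it extends to all `(t, u)` because `P_n` sits on finitely many continuous paths, which
preserve their position relative to a level under a small change of time, while the marginals of
`P` are continuous in `t` by (iii).
-/

section Empirical

variable {E : Type*} [MeasurableSpace E]

def empiricalMeasure (x : ℕ → E) (n : ℕ) : Measure E :=
  (n : ℝ≥0∞)⁻¹ • ∑ k ∈ Finset.range n, Measure.dirac (x k)

theorem empiricalMeasure_apply (x : ℕ → E) (n : ℕ) {S : Set E} (hS : MeasurableSet S) :
    empiricalMeasure x n S = (n : ℝ≥0∞)⁻¹ * ∑ k ∈ Finset.range n, S.indicator 1 (x k) := by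
  simp [empiricalMeasure, Measure.dirac_apply' _ hS]

theorem empiricalMeasure_real_apply (x : ℕ → E) (n : ℕ) {S : Set E} (hS : MeasurableSet S) :
    (empiricalMeasure x n).real S = (n : ℝ)⁻¹ * ∑ k ∈ Finset.range n, S.indicator 1 (x k) := by
  rw [measureReal_def, empiricalMeasure_apply x n hS, ENNReal.toReal_mul, ENNReal.toReal_inv,
    ENNReal.toReal_natCast, ENNReal.toReal_sum fun k _ => by by_cases hk : x k ∈ S <;> simp [hk]]
  congr 1
  refine Finset.sum_congr rfl fun k _ => ?_
  by_cases hk : x k ∈ S <;> simp [hk]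

theorem isProbabilityMeasure_empiricalMeasure (x : ℕ → E) {n : ℕ} (hn : n ≠ 0) :
    IsProbabilityMeasure (empiricalMeasure x n) :=
  ⟨by simp [empiricalMeasure_apply x n MeasurableSet.univ, ENNReal.inv_mul_cancel, hn]⟩

theorem empiricalMeasure_congr_set {x : ℕ → E} {n : ℕ} {A B : Set E} (hA : MeasurableSet A)
    (hB : MeasurableSet B) (h : ∀ k < n, x k ∈ A ↔ x k ∈ B) :
    empiricalMeasure x n A = empiricalMeasure x n B := by
  rw [empiricalMeasure_apply x n hA, empiricalMeasure_apply x n hB]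
  congr 1
  refine Finset.sum_congr rfl fun k hk => ?_
  by_cases hkA : x k ∈ A
  · simp [hkA, (h k (Finset.mem_range.mp hk)).mp hkA]
  · simp [hkA, mt (h k (Finset.mem_range.mp hk)).mpr hkA]

variable {Ω : Type*} [MeasurableSpace Ω]

theorem measurable_empiricalMeasure_real_apply {X : ℕ → Ω → E} (hX : ∀ k, Measurable (X k))
    (n : ℕ) {S : Set E} (hS : MeasurableSet S) :
    Measurable fun ω => (empiricalMeasure (X · ω) n).real S := by
  simp_rw [empiricalMeasure_real_apply _ n hS]
  exact measurable_const.mul <| Finset.measurable_sum _ fun k _ =>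
    (measurable_const.indicator hS).comp (hX k)

theorem ae_tendsto_empiricalMeasure_real {μ : Measure Ω} [IsProbabilityMeasure μ]
    {P : Measure E} {X : ℕ → Ω → E} (hX : ∀ k, Measurable (X k)) (hlaw : ∀ k, μ.map (X k) = P)
    (hindep : Pairwise fun i j => ProbabilityTheory.IndepFun (X i) (X j) μ)
    {S : Set E} (hS : MeasurableSet S) :
    ∀ᵐ ω ∂μ, Tendsto (fun n => (empiricalMeasure (X · ω) n).real S) atTop (𝓝 (P.real S)) := by
  have hφ : Measurable (S.indicator (1 : E → ℝ)) := measurable_const.indicator hS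
  have hlaw' : ∀ k, μ.map (fun ω => S.indicator 1 (X k ω)) = P.map (S.indicator 1) := fun k => by
    rw [← hlaw k, Measure.map_map hφ (hX k)]; rfl
  have hmean : ∫ ω, S.indicator 1 (X 0 ω) ∂μ = P.real S := by
    rw [← integral_map (hX 0).aemeasurable hφ.aestronglyMeasurable, hlaw 0,
      integral_indicator_one hS]
  have hslln := ProbabilityTheory.strong_law_ae (fun k ω => S.indicator (1 : E → ℝ) (X k ω))
    ((integrable_const (1 : ℝ)).indicator hS |>.comp_measurable (hX 0))
    (fun i j hij => (hindep hij).comp hφ hφ)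
    (fun i => ⟨(hφ.comp (hX i)).aemeasurable, (hφ.comp (hX 0)).aemeasurable, by
      rw [hlaw' i, hlaw' 0]⟩)
  filter_upwards [hslln] with ω hω
  simpa only [empiricalMeasure_real_apply _ _ hS, ← hmean, smul_eq_mul] using hω

end Empirical

theorem tendsto_measure_of_ae_eventually_notMem {Ω : Type*} [MeasurableSpace Ω] {μ : Measure Ω}
    [IsFiniteMeasure μ] {A : ℕ → Set Ω} (hA : ∀ n, MeasurableSet (A n))
    (h : ∀ᵐ ω ∂μ, ∀ᶠ n in atTop, ω ∉ A n) : Tendsto (fun n => μ (A n)) atTop (𝓝 0) := by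
  have htail : Tendsto (fun n => μ (⋃ k ≥ n, A k)) atTop (𝓝 (μ (⋂ n, ⋃ k ≥ n, A k))) :=
    tendsto_measure_iInter_atTop
      (fun n => (MeasurableSet.biUnion (to_countable _) fun k _ => hA k).nullMeasurableSet)
      (fun m n hmn => biUnion_subset_biUnion_left fun k hk => le_trans hmn hk)
      ⟨0, measure_ne_top _ _⟩
  have hlimsup : μ (⋂ n, ⋃ k ≥ n, A k) = 0 := by
    refine measure_mono_null (fun ω hω => ?_) (ae_iff.mp h)
    intro hev
    obtain ⟨N, hN⟩ := eventually_atTop.mp hev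
    obtain ⟨k, hk, hωk⟩ := mem_iUnion₂.mp (mem_iInter.mp hω N)
    exact hN k hk hωk
  rw [hlimsup] at htail
  exact tendsto_of_tendsto_of_tendsto_of_le_of_le tendsto_const_nhds htail (fun _ => bot_le)
    fun n => measure_mono (subset_biUnion_of_mem (u := A) (le_refl n))

section Transfer

variable {T E : Type*} [TopologicalSpace T] [MeasurableSpace E]

theorem eventually_measureReal_Ioc_le {P : Measure E} [IsFiniteMeasure P] {f : E → ℝ}
    (hf : Measurable f) (u : ℝ) {τ : ℝ} (hτ : 0 < τ) :
    ∀ᶠ v in 𝓝[>] u, P.real {e | u < f e ∧ f e ≤ v} ≤ τ := by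
  have h := tendsto_measure_biInter_gt (μ := P) (s := fun v => {e | u < f e ∧ f e ≤ v}) (a := u)
    (fun r _ => ((measurableSet_lt measurable_const hf).inter
      (measurableSet_le hf measurable_const)).nullMeasurableSet)
    (fun i j _ hij e he => ⟨he.1, he.2.trans hij⟩) ⟨u + 1, by linarith, measure_ne_top _ _⟩
  have hempty : ⋂ r > u, {e | u < f e ∧ f e ≤ r} = ∅ := by
    refine eq_empty_of_forall_notMem fun e he => ?_
    simp only [mem_iInter] at he
    obtain ⟨r, hur, hrf⟩ := exists_between (he (u + 1) (by linarith)).1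
    exact (he r hur).2.not_gt hrf
  rw [hempty, measure_empty] at h
  filter_upwards [h.eventually (gt_mem_nhds (ENNReal.ofReal_pos.mpr hτ))] with v hv
  exact ENNReal.toReal_le_of_le_ofReal hτ.le hv.le

theorem eventually_forall_notMem_Ioc (y : ℕ → ℝ) (n : ℕ) (u : ℝ) :
    ∀ᶠ v in 𝓝[>] u, ∀ k < n, y k ∉ Ioc u v := by
  have hk : ∀ k, ∀ᶠ v in 𝓝[>] u, y k ∉ Ioc u v := fun k => by
    by_cases huk : u < y k
    · filter_upwards [nhdsWithin_le_nhds (eventually_lt_nhds huk)] with v hv hmem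
      exact hmem.2.not_gt hv
    · exact Eventually.of_forall fun v hmem => huk hmem.1
  simpa only [Finset.mem_range] using (Finset.range n).eventually_all.mpr fun k _ => hk k

theorem empiricalMeasure_lt_eq_of_abs_sub_lt {x : ℕ → E} {n : ℕ} {φ ψ : E → ℝ}
    (hφ : Measurable φ) (hψ : Measurable ψ) {u q v γ : ℝ} (hγq : γ ≤ q - u) (hγv : γ ≤ v - q)
    (hgap : ∀ k < n, φ (x k) ∉ Ioc u v) (hclose : ∀ k < n, |ψ (x k) - φ (x k)| < γ) :
    empiricalMeasure x n {e | u < φ e} = empiricalMeasure x n {e | q < ψ e} := by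
  refine empiricalMeasure_congr_set (measurableSet_lt measurable_const hφ)
    (measurableSet_lt measurable_const hψ) fun k hk => ?_
  have hk_close := abs_lt.mp (hclose k hk)
  change u < φ (x k) ↔ q < ψ (x k)
  constructor <;> intro h
  · have : v < φ (x k) := not_le.mp fun h' => hgap k hk ⟨h, h'⟩
    linarith
  · by_contra! h'
    linarith

theorem abs_empiricalMeasure_real_sub_le_of_dense {P : Measure E} [IsFiniteMeasure P]
    {Φ : T → E → ℝ} (hΦm : ∀ t, Measurable (Φ t)) (hΦc : ∀ e, Continuous (Φ · e))
    (hPc : ∀ u, Continuous fun t => P.real {e | u < Φ t e}) {D : Set T} (hD : Dense D)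
    {x : ℕ → E} {n : ℕ} {η : ℝ}
    (hη : ∀ t ∈ D, ∀ q : ℚ,
      |(empiricalMeasure x n).real {e | q < Φ t e} - P.real {e | q < Φ t e}| ≤ η)
    (t : T) (u : ℝ) :
    |(empiricalMeasure x n).real {e | u < Φ t e} - P.real {e | u < Φ t e}| ≤ η := by
  -- Pass to a rational level `q` slightly above `u`, below the next sample value at `t` and with
  -- little `P`-mass in between, and to `s ∈ D` so close to `t` that no sample path changes side.
  refine le_of_forall_pos_le_add fun τ hτ => ?_
  obtain ⟨v, ⟨hPv, hgap⟩, huv⟩ := (((eventually_measureReal_Ioc_le (P := P) (hΦm t) u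
    (half_pos hτ)).and (eventually_forall_notMem_Ioc (fun k => Φ t (x k)) n u)).and
    self_mem_nhdsWithin).exists
  obtain ⟨q, huq, hqv⟩ := exists_rat_btwn huv
  set γ := min ((q : ℝ) - u) (v - q)
  have hnear : ∀ᶠ s in 𝓝 t, (∀ k ∈ Finset.range n, |Φ s (x k) - Φ t (x k)| < γ) ∧
      |P.real {e | q < Φ s e} - P.real {e | q < Φ t e}| < τ / 2 := by
    refine ((Finset.range n).eventually_all.mpr fun k _ => ?_).and ?_
    · exact (hΦc (x k)).continuousAt.eventually
        (Metric.ball_mem_nhds _ (lt_min (by linarith) (by linarith)))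
    · exact (hPc q).continuousAt.eventually (Metric.ball_mem_nhds _ (half_pos hτ))
  obtain ⟨s, hsD, hpaths, hPs⟩ := hD.inter_nhds_nonempty hnear
  have hemp := congrArg ENNReal.toReal (empiricalMeasure_lt_eq_of_abs_sub_lt (hΦm t) (hΦm s)
    (min_le_left _ _) (min_le_right _ _) hgap fun k hk => hpaths k (Finset.mem_range.mpr hk))
  have hlower : P.real {e | q < Φ t e} ≤ P.real {e | u < Φ t e} :=
    measureReal_mono fun e (he : (q : ℝ) < Φ t e) => huq.trans he
  have hupper : P.real {e | u < Φ t e} ≤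
      P.real {e | q < Φ t e} + P.real {e | u < Φ t e ∧ Φ t e ≤ v} := by
    refine (measureReal_mono fun e (he : u < Φ t e) => ?_).trans (measureReal_union_le _ _)
    by_cases hqe : (q : ℝ) < Φ t e
    · exact Or.inl hqe
    · exact Or.inr ⟨he, (not_lt.mp hqe).trans hqv.le⟩
  have hDq := abs_le.mp (hη s hsD q)
  have hPs' := abs_lt.mp (by simpa only [Real.dist_eq] using hPs)
  rw [measureReal_def, hemp, ← measureReal_def, abs_le]
  constructor <;> linarith

end Transfer

theorem tendsto_measureReal_le_sub_one_div {E : Type*} [MeasurableSpace E] (P : Measure E)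
    [IsFiniteMeasure P] (f : E → ℝ) (u : ℝ) :
    Tendsto (fun m : ℕ => P.real {e | f e ≤ u - 1 / ((m : ℝ) + 1)}) atTop
      (𝓝 (P.real {e | f e < u})) := by
  have hmono : Monotone fun m : ℕ => {e | f e ≤ u - 1 / ((m : ℝ) + 1)} := fun m m' hmm e he =>
    he.trans (sub_le_sub_left (Nat.one_div_le_one_div hmm) u)
  have hunion : ⋃ m : ℕ, {e | f e ≤ u - 1 / ((m : ℝ) + 1)} = {e | f e < u} := by
    ext e
    simp only [mem_iUnion]
    constructor
    · rintro ⟨m, hm⟩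
      exact hm.trans_lt (sub_lt_self u Nat.one_div_pos_of_nat)
    · intro he
      obtain ⟨m, hm⟩ := exists_nat_one_div_lt (sub_pos.mpr he : (0 : ℝ) < u - f e)
      exact ⟨m, by change f e ≤ _; linarith⟩
  have hlim := tendsto_measure_iUnion_atTop (μ := P) hmono
  rw [hunion] at hlim
  exact (ENNReal.tendsto_toReal (measure_ne_top _ _)).comp hlim

theorem abs_sub_le_of_forall_int_mul {F G : ℝ → ℝ} (hF : Monotone F) (hG : Monotone G)
    {h θ τ : ℝ} (hh : 0 < h) (hosc : ∀ y y', dist y y' ≤ h → dist (G y) (G y') ≤ θ)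
    (hgrid : ∀ i : ℤ, |F (i * h) - G (i * h)| ≤ τ) (y : ℝ) : |F y - G y| ≤ θ + τ := by
  set i := ⌊y / h⌋
  have hlo : (i : ℝ) * h ≤ y := (le_div_iff₀ hh).mp (Int.floor_le _)
  have hhi : y ≤ ((i + 1 : ℤ) : ℝ) * h := by
    push_cast; exact ((div_le_iff₀ hh).mp (Int.lt_floor_add_one _).le)
  have hcell := abs_le.mp (hosc (((i + 1 : ℤ) : ℝ) * h) (i * h) (by
    rw [Real.dist_eq, show ((i + 1 : ℤ) : ℝ) * h - i * h = h by push_cast; ring, abs_of_pos hh]))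
  have hgrid_lo := abs_le.mp (hgrid i)
  have hgrid_hi := abs_le.mp (hgrid (i + 1))
  have := hF hlo; have := hF hhi; have := hG hlo; have := hG hhi
  rw [abs_le]
  constructor <;> linarith

theorem Continuous.uniformContinuous_of_const_off_Icc {G : ℝ → ℝ} (hG : Continuous G) {a b : ℝ}
    (hab : a ≤ b) (hlo : ∀ y ≤ a, G y = G a) (hhi : ∀ y, b ≤ y → G y = G b) :
    UniformContinuous G := by
  have hext : G = IccExtend hab (G ∘ Subtype.val) := funext fun y => by
    rcases le_total y a with hya | hay
    · rw [IccExtend_of_le_left _ _ hya]; exact hlo y hya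
    rcases le_total b y with hby | hyb
    · rw [IccExtend_of_right_le _ _ hby]; exact hhi y hby
    · rw [IccExtend_of_mem _ _ ⟨hay, hyb⟩]; rfl
  rw [hext]
  exact (CompactSpace.uniformContinuous_of_continuous (hG.comp continuous_subtype_val)).comp
    (LipschitzWith.projIcc hab).uniformContinuous

theorem ProbabilityTheory.continuous_cdf (μ : Measure ℝ) [IsProbabilityMeasure μ]
    [NullSingletonClass μ] : Continuous (cdf μ) := by
  refine continuous_iff_continuousAt.mpr fun a =>
    (monotone_cdf μ).continuousAt_iff_leftLim_eq_rightLim.mpr ?_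
  have hjump := (cdf μ).measure_singleton a
  rw [measure_cdf, measure_singleton, eq_comm, ENNReal.ofReal_eq_zero, sub_nonpos] at hjump
  rw [(cdf μ).rightLim_eq]
  exact le_antisymm ((monotone_cdf μ).leftLim_le le_rfl) hjump

theorem measure_preimage_singleton_eq_zero_of_prod {α β : Type*} [MeasurableSpace α]
    {P : Measure α} [SFinite P] (φ : α → β) (hdiag : (P.prod P) (diagonal α) = 0)
    (hties : (P.prod P) {p | φ p.1 = φ p.2 ∧ p.1 ≠ p.2} = 0) (c : β) : P (φ ⁻¹' {c}) = 0 := by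
  have hsq : P (φ ⁻¹' {c}) * P (φ ⁻¹' {c}) = 0 := by
    rw [← Measure.prod_prod]
    refine measure_mono_null (fun p hp => ?_) (measure_union_null hties hdiag)
    by_cases hp12 : p.1 = p.2
    · exact Or.inr hp12
    · exact Or.inl ⟨hp.1.trans hp.2.symm, hp12⟩
  simpa using hsq

theorem prod_diagonal_eq_zero_of_ae_ne {Ω E : Type*} [MeasurableSpace Ω] [MeasurableSpace E]
    [MeasurableEq E] {μ : Measure Ω} [IsFiniteMeasure μ] {P : Measure E} {Y Z : Ω → E}
    (hY : Measurable Y) (hZ : Measurable Z) (hYlaw : μ.map Y = P) (hZlaw : μ.map Z = P)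
    (hYZ : ProbabilityTheory.IndepFun Y Z μ) (hne : ∀ᵐ ω ∂μ, Y ω ≠ Z ω) :
    (P.prod P) (diagonal E) = 0 := by
  have hprod := (ProbabilityTheory.indepFun_iff_map_prod_eq_prod_map_map
    hY.aemeasurable hZ.aemeasurable).mp hYZ
  rw [hYlaw, hZlaw] at hprod
  rw [← hprod, Measure.map_apply (hY.prodMk hZ) measurableSet_diagonal]
  simpa [ae_iff, preimage, mem_diagonal_iff] using hne

section Depth

variable (Q : Measure FSp)

theorem pdepth_le_one (g : unitInterval → ℝ) (t : unitInterval) : pdepth Q g t ≤ 1 :=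
  sub_le_self _ (abs_nonneg _)

theorem monotone_dcdf (g : unitInterval → ℝ) : Monotone (dcdf Q g) := fun _ _ hrs =>
  measureReal_mono fun _ ht => le_trans ht hrs

theorem dcdf_one (g : unitInterval → ℝ) : dcdf Q g 1 = 1 := by
  simp [dcdf, pdepth_le_one]

theorem bddBelow_dminSet (g : unitInterval → ℝ) :
    BddBelow {r ∈ Icc (0:ℝ) 1 | 0 < dcdf Q g r} :=
  ⟨0, fun _ hr => hr.1.1⟩

theorem one_mem_dminSet (g : unitInterval → ℝ) : (1 : ℝ) ∈ {r ∈ Icc (0:ℝ) 1 | 0 < dcdf Q g r} :=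
  ⟨right_mem_Icc.mpr zero_le_one, by rw [dcdf_one]; exact one_pos⟩

theorem dmin_nonneg (g : unitInterval → ℝ) : 0 ≤ dmin Q g :=
  le_csInf ⟨1, one_mem_dminSet Q g⟩ fun _ hr => hr.1.1

theorem dmin_le_one (g : unitInterval → ℝ) : dmin Q g ≤ 1 :=
  csInf_le (bddBelow_dminSet Q g) (one_mem_dminSet Q g)

theorem dmin_le {g : unitInterval → ℝ} {r : ℝ} (hr : r ∈ Icc (0:ℝ) 1) (hpos : 0 < dcdf Q g r) :
    dmin Q g ≤ r :=
  csInf_le (bddBelow_dminSet Q g) ⟨hr, hpos⟩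

theorem dcdf_eq_zero_of_lt_dmin {g : unitInterval → ℝ} {r : ℝ} (hr : r ∈ Icc (0:ℝ) 1)
    (hlt : r < dmin Q g) :
    dcdf Q g r = 0 :=
  le_antisymm (not_lt.mp fun hpos => (dmin_le Q hr hpos).not_gt hlt) measureReal_nonneg

theorem dcdf_pos_of_dmin_lt {g : unitInterval → ℝ} {r : ℝ} (hlt : dmin Q g < r) :
    0 < dcdf Q g r := by
  obtain ⟨s, hs, hsr⟩ := (csInf_lt_iff (bddBelow_dminSet Q g) ⟨1, one_mem_dminSet Q g⟩).mp hlt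
  exact hs.2.trans_le (monotone_dcdf Q g hsr.le)

theorem prec_of_dmin_lt {f g : unitInterval → ℝ} (hlt : dmin Q f < dmin Q g) : prec Q f g := by
  have hmem : ∀ r ∈ Ioo (dmin Q f) (dmin Q g), r ∈ Rset Q f g := fun r hr => by
    have hr01 : r ∈ Icc (0:ℝ) 1 :=
      ⟨(dmin_nonneg Q f).trans hr.1.le, hr.2.le.trans (dmin_le_one Q g)⟩
    refine ⟨hr01, ?_⟩
    rw [dcdf_eq_zero_of_lt_dmin Q hr01 hr.2]
    exact (dcdf_pos_of_dmin_lt Q hr.1).ne'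
  have hge : ∀ r ∈ Rset Q f g, dmin Q f ≤ r := fun r hr => not_lt.mp fun hrf =>
    hr.2 (by rw [dcdf_eq_zero_of_lt_dmin Q hr.1 hrf,
      dcdf_eq_zero_of_lt_dmin Q hr.1 (hrf.trans hlt)])
  have hinf : sInf (Rset Q f g) = dmin Q f := by
    refine csInf_eq_of_forall_ge_of_forall_gt_exists_lt (nonempty_of_mem (hmem _
      (exists_between hlt).choose_spec)) hge fun w hw => ?_
    obtain ⟨r, hfr, hrw⟩ := exists_between (lt_min hw hlt)
    exact ⟨r, hmem r ⟨hfr, hrw.trans_le (min_le_right _ _)⟩, hrw.trans_le (min_le_left _ _)⟩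
  refine ⟨nonempty_of_mem (hmem _ (exists_between hlt).choose_spec), dmin Q g - dmin Q f,
    sub_pos.mpr hlt, fun r ⟨hr, _⟩ => ?_⟩
  rw [hinf, add_sub_cancel] at hr
  rw [dcdf_eq_zero_of_lt_dmin Q (hmem r hr).1 hr.2]
  exact dcdf_pos_of_dmin_lt Q hr.1

theorem prec_asymm {f g : unitInterval → ℝ} (hfg : prec Q f g) : ¬ prec Q g f := by
  rintro ⟨-, δ₂, hδ₂, hgf⟩
  obtain ⟨⟨r₀, hr₀⟩, δ₁, hδ₁, hfg⟩ := hfg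
  have hsymm : Rset Q g f = Rset Q f g := by
    ext r; exact and_congr_right fun _ => ne_comm
  rw [hsymm] at hgf
  set s := sInf (Rset Q f g)
  have hs0 : 0 ≤ s := le_csInf ⟨r₀, hr₀⟩ fun r hr => hr.1.1
  -- at `r = 1` both d-CDFs equal `1`, so `R(f,g)` contains a point below `1`
  have hr₀1 : r₀ < 1 := lt_of_le_of_ne hr₀.1.2 fun h1 => hr₀.2 (by rw [h1, dcdf_one, dcdf_one])
  have hs1 : s < 1 := (csInf_le ⟨0, fun r hr => hr.1.1⟩ hr₀).trans_lt hr₀1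
  obtain ⟨r, hsr, hr⟩ := exists_between (lt_min (lt_min (lt_add_of_pos_right s hδ₁)
    (lt_add_of_pos_right s hδ₂)) hs1)
  have hr01 : r ∈ Icc (0:ℝ) 1 := ⟨hs0.trans hsr.le, (hr.trans_le (min_le_right _ _)).le⟩
  have h₁ := hfg r ⟨⟨hsr, (hr.trans_le (min_le_left _ _)).trans_le (min_le_left _ _)⟩, hr01⟩
  have h₂ := hgf r ⟨⟨hsr, (hr.trans_le (min_le_left _ _)).trans_le (min_le_right _ _)⟩, hr01⟩
  exact h₁.not_gt h₂

theorem dmin_le_of_not_prec {f g : unitInterval → ℝ} (h : ¬ prec Q f g) : dmin Q g ≤ dmin Q f :=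
  not_lt.mp fun hlt => h (prec_of_dmin_lt Q hlt)

theorem not_prec_of_dmin_lt {f g : unitInterval → ℝ} (h : dmin Q g < dmin Q f) : ¬ prec Q f g :=
  prec_asymm Q (prec_of_dmin_lt Q h)

theorem ed_le_measureReal_dmin_le [IsFiniteMeasure Q] (f : unitInterval → ℝ) :
    ed Q f ≤ Q.real {x : FSp | dmin Q x ≤ dmin Q f} :=
  measureReal_mono fun _ => dmin_le_of_not_prec Q

theorem measureReal_dmin_lt_le_ed [IsFiniteMeasure Q] (f : unitInterval → ℝ) :
    Q.real {x : FSp | dmin Q x < dmin Q f} ≤ ed Q f :=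
  measureReal_mono fun _ => not_prec_of_dmin_lt Q

theorem dmin_lt_iff {g : unitInterval → ℝ} {c : ℝ} :
    dmin Q g < c ↔ ∃ q : ℚ, (q : ℝ) < c ∧ (q : ℝ) ∈ Icc (0:ℝ) 1 ∧ 0 < dcdf Q g q := by
  constructor
  · intro hlt
    obtain ⟨r, hr, hrc⟩ :=
      (csInf_lt_iff (bddBelow_dminSet Q g) ⟨1, one_mem_dminSet Q g⟩).mp hlt
    rcases hr.1.2.lt_or_eq with hr1 | rfl
    · obtain ⟨q, hrq, hqc⟩ := exists_rat_btwn (lt_min hrc hr1)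
      exact ⟨q, hqc.trans_le (min_le_left _ _), ⟨hr.1.1.trans hrq.le,
        (hqc.trans_le (min_le_right _ _)).le⟩, hr.2.trans_le (monotone_dcdf Q g hrq.le)⟩
    · exact ⟨1, by simpa using hrc, by simp, by simpa using hr.2⟩
  · rintro ⟨q, hqc, hq01, hpos⟩
    exact (dmin_le Q hq01 hpos).trans_lt hqc

end Depth

section ExtremalDepth

variable {P Q : Measure FSp}

theorem ed_eq_measureReal_dmin_le [IsFiniteMeasure P] (hP : ∀ c, P {x : FSp | dmin P x = c} = 0)
    (f : unitInterval → ℝ) : ed P f = P.real {x : FSp | dmin P x ≤ dmin P f} := by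
  refine le_antisymm (ed_le_measureReal_dmin_le P f) ?_
  have hnull : P.real {x : FSp | dmin P x = dmin P f} = 0 := by simp [measureReal_def, hP]
  calc P.real {x : FSp | dmin P x ≤ dmin P f}
      ≤ P.real ({x : FSp | dmin P x < dmin P f} ∪ {x : FSp | dmin P x = dmin P f}) :=
        measureReal_mono fun x hx => (lt_or_eq_of_le hx).symm.elim Or.inr Or.inl
    _ ≤ P.real {x : FSp | dmin P x < dmin P f} + P.real {x : FSp | dmin P x = dmin P f} :=
        measureReal_union_le _ _
    _ ≤ ed P f := by rw [hnull, add_zero]; exact measureReal_dmin_lt_le_ed P f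

theorem ed_le_measureReal_dmin_le_add [IsFiniteMeasure Q] {η : ℝ}
    (hdmin : ∀ g, |dmin Q g - dmin P g| ≤ η) (f : unitInterval → ℝ) :
    ed Q f ≤ Q.real {x : FSp | dmin P x ≤ dmin P f + 2 * η} :=
  (ed_le_measureReal_dmin_le Q f).trans <| measureReal_mono fun x (hx : dmin Q x ≤ dmin Q f) => by
    show dmin P x ≤ dmin P f + 2 * η
    linarith [abs_le.mp (hdmin x), abs_le.mp (hdmin f)]

theorem measureReal_dmin_le_sub_le_ed [IsFiniteMeasure Q] {η : ℝ} (hη : 0 < η)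
    (hdmin : ∀ g, |dmin Q g - dmin P g| ≤ η) (f : unitInterval → ℝ) :
    Q.real {x : FSp | dmin P x ≤ dmin P f - 3 * η} ≤ ed Q f :=
  (measureReal_mono (μ := Q) fun x (hx : dmin P x ≤ dmin P f - 3 * η) => by
    show dmin Q x < dmin Q f
    linarith [abs_le.mp (hdmin x), abs_le.mp (hdmin f)]).trans (measureReal_dmin_lt_le_ed Q f)

theorem abs_ed_sub_ed_le [IsProbabilityMeasure P] [IsFiniteMeasure Q]
    (hP : ∀ c, P {x : FSp | dmin P x = c} = 0) {η h θ τ : ℝ} (hη : 0 < η) (hηh : 3 * η ≤ h)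
    (hdmin : ∀ g, |dmin Q g - dmin P g| ≤ η)
    (hosc : ∀ y y', dist y y' ≤ h →
      dist (P.real {x : FSp | dmin P x ≤ y}) (P.real {x : FSp | dmin P x ≤ y'}) ≤ θ)
    (hgrid : ∀ i : ℤ,
      |Q.real {x : FSp | dmin P x ≤ i * h} - P.real {x : FSp | dmin P x ≤ i * h}| ≤ τ)
    (f : unitInterval → ℝ) : |ed Q f - ed P f| ≤ 2 * θ + τ := by
  have hFG := abs_sub_le_of_forall_int_mul (F := fun y => Q.real {x : FSp | dmin P x ≤ y})
    (G := fun y => P.real {x : FSp | dmin P x ≤ y})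
    (fun _ _ hy => measureReal_mono (μ := Q) fun _ hx => le_trans hx hy)
    (fun _ _ hy => measureReal_mono (μ := P) fun _ hx => le_trans hx hy) (by linarith) hosc hgrid
  set c := dmin P f
  have hFup := abs_le.mp (hFG (c + 2 * η))
  have hFlow := abs_le.mp (hFG (c - 3 * η))
  have hosc' : ∀ y y', |y - y'| ≤ h →
      |P.real {x : FSp | dmin P x ≤ y} - P.real {x : FSp | dmin P x ≤ y'}| ≤ θ := by
    simpa only [Real.dist_eq] using hosc
  have hGup := abs_le.mp (hosc' (c + 2 * η) c (by rw [abs_le]; constructor <;> linarith))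
  have hGlow := abs_le.mp (hosc' (c - 3 * η) c (by rw [abs_le]; constructor <;> linarith))
  have hup := ed_le_measureReal_dmin_le_add hdmin f
  have hlow := measureReal_dmin_le_sub_le_ed hη hdmin f
  rw [ed_eq_measureReal_dmin_le hP f, abs_le]
  constructor <;> linarith

end ExtremalDepth

section HalfspaceClose

variable {P Q : Measure FSp}

def HalfspaceClose (Q P : Measure FSp) (η : ℝ) : Prop :=
  ∀ (t : unitInterval) (u : ℝ),
    |Q.real {x : FSp | u < x t} - P.real {x : FSp | u < x t}| ≤ η ∧
    |Q.real {x : FSp | x t < u} - P.real {x : FSp | x t < u}| ≤ η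

theorem HalfspaceClose.abs_pdepth_sub_le {η : ℝ} (hQP : HalfspaceClose Q P η)
    (g : unitInterval → ℝ) (t : unitInterval) : |pdepth Q g t - pdepth P g t| ≤ 2 * η := by
  have hgt := abs_le.mp (hQP t (g t)).1
  have hlt := abs_le.mp (hQP t (g t)).2
  simp only [pdepth, ← measureReal_def]
  rw [sub_sub_sub_cancel_left]
  refine (abs_abs_sub_abs_le_abs_sub _ _).trans ?_
  rw [abs_le]
  constructor <;> linarith

theorem dcdf_le_dcdf_add {g : unitInterval → ℝ} {η : ℝ}
    (hpd : ∀ t, |pdepth Q g t - pdepth P g t| ≤ η) (r : ℝ) : dcdf Q g r ≤ dcdf P g (r + η) :=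
  measureReal_mono fun t (ht : pdepth Q g t ≤ r) =>
    show pdepth P g t ≤ r + η by linarith [abs_le.mp (hpd t)]

theorem dmin_le_dmin_add {g : unitInterval → ℝ} {η : ℝ} (hη : 0 ≤ η)
    (hcdf : ∀ r, dcdf Q g r ≤ dcdf P g (r + η)) : dmin P g ≤ dmin Q g + η := by
  rw [← sub_le_iff_le_add]
  refine le_csInf ⟨1, one_mem_dminSet Q g⟩ fun r hr => ?_
  rcases le_or_gt (r + η) 1 with hr1 | hr1
  · linarith [dmin_le P ⟨by linarith [hr.1.1], hr1⟩ (hr.2.trans_le (hcdf r))]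
  · linarith [dmin_le_one P g]

theorem abs_dmin_sub_le_of_abs_pdepth_sub_le {g : unitInterval → ℝ} {η : ℝ}
    (hpd : ∀ t, |pdepth Q g t - pdepth P g t| ≤ η) : |dmin Q g - dmin P g| ≤ η := by
  have hη : 0 ≤ η := (abs_nonneg _).trans (hpd 0)
  have hPQ := dmin_le_dmin_add hη (dcdf_le_dcdf_add hpd)
  have hQP := dmin_le_dmin_add hη (dcdf_le_dcdf_add fun t => (abs_sub_comm _ _).trans_le (hpd t))
  rw [abs_le]
  constructor <;> linarith

theorem HalfspaceClose.abs_dmin_sub_le {η : ℝ} (hQP : HalfspaceClose Q P η)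
    (g : unitInterval → ℝ) : |dmin Q g - dmin P g| ≤ 2 * η :=
  abs_dmin_sub_le_of_abs_pdepth_sub_le (hQP.abs_pdepth_sub_le g)

end HalfspaceClose

section Measurability

variable (P : Measure FSp) [SFinite P]

theorem measurable_measure_lt_eval :
    Measurable fun q : unitInterval × ℝ => P {x : FSp | q.2 < x q.1} :=
  measurable_measure_prodMk_left (s := {p : (unitInterval × ℝ) × FSp | p.1.2 < p.2 p.1.1})
    (measurableSet_lt measurable_fst.snd
      (continuous_eval.measurable.comp (measurable_snd.prodMk measurable_fst.fst)))

theorem measurable_measure_eval_lt :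
    Measurable fun q : unitInterval × ℝ => P {x : FSp | x q.1 < q.2} :=
  measurable_measure_prodMk_left (s := {p : (unitInterval × ℝ) × FSp | p.2 p.1.1 < p.1.2})
    (measurableSet_lt (continuous_eval.measurable.comp (measurable_snd.prodMk measurable_fst.fst))
      measurable_fst.snd)

theorem measurable_pdepth : Measurable fun p : FSp × unitInterval => pdepth P p.1 p.2 := by
  have hq : Measurable fun p : FSp × unitInterval => (p.2, p.1 p.2) :=
    measurable_snd.prodMk continuous_eval.measurable
  exact measurable_const.sub ((((measurable_measure_lt_eval P).comp hq).ennreal_toReal.sub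
    ((measurable_measure_eval_lt P).comp hq).ennreal_toReal).abs)

theorem measurable_dcdf (r : ℝ) : Measurable fun g : FSp => dcdf P g r :=
  (measurable_measure_prodMk_left (ν := (volume : Measure unitInterval))
    (measurableSet_le (measurable_pdepth P) measurable_const)).ennreal_toReal

theorem measurable_dmin : Measurable fun g : FSp => dmin P g := by
  refine measurable_of_Iio fun c => ?_
  have hset : (fun g : FSp => dmin P g) ⁻¹' Iio c =
      ⋃ q : ℚ, ⋃ (_ : (q : ℝ) < c ∧ (q : ℝ) ∈ Icc (0:ℝ) 1), {g : FSp | 0 < dcdf P g q} := by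
    ext g
    simp [dmin_lt_iff, and_assoc]
  rw [hset]
  exact MeasurableSet.iUnion fun q => MeasurableSet.iUnion fun _ =>
    measurableSet_lt measurable_const (measurable_dcdf P q)

end Measurability

section Marginals

variable {P : Measure FSp}

theorem uniformContinuous_margF
    (hequi : ∀ u₀ : ℝ, ∃ ε > (0:ℝ), ∀ η > (0:ℝ), ∃ δ > (0:ℝ),
      ∀ (t s : unitInterval) (u : ℝ), dist t s ≤ δ → |u - u₀| < ε →
        |margF P t u - margF P s u| ≤ η) (u : ℝ) :
    UniformContinuous fun t => margF P t u := by
  obtain ⟨ε, hε, hmod⟩ := hequi u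
  refine Metric.uniformContinuous_iff_le.mpr fun η hη => ?_
  obtain ⟨δ, hδ, hδmod⟩ := hmod η hη
  exact ⟨δ, hδ, fun t s hts => hδmod t s u hts (by simpa using hε)⟩

theorem uniformContinuous_measureReal_lt_eval [IsProbabilityMeasure P]
    (hequi : ∀ u₀ : ℝ, ∃ ε > (0:ℝ), ∀ η > (0:ℝ), ∃ δ > (0:ℝ),
      ∀ (t s : unitInterval) (u : ℝ), dist t s ≤ δ → |u - u₀| < ε →
        |margF P t u - margF P s u| ≤ η) (u : ℝ) :
    UniformContinuous fun t => P.real {x : FSp | u < x t} := by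
  have hcompl : (fun t => P.real {x : FSp | u < x t}) = fun t => 1 - margF P t u := by
    funext t
    rw [margF, ← measureReal_def, ← probReal_compl_eq_one_sub
      (measurableSet_le (continuous_eval_const t).measurable measurable_const)]
    congr 1
    ext x
    simp
  rw [hcompl]
  exact uniformContinuous_const.sub (uniformContinuous_margF hequi u)

-- `P{x(t) < u}` is a limit of marginal CDFs `F_t(v)`, `v ↑ u`, which are equicontinuous in `t`
theorem uniformContinuous_measureReal_eval_lt [IsFiniteMeasure P]
    (hequi : ∀ u₀ : ℝ, ∃ ε > (0:ℝ), ∀ η > (0:ℝ), ∃ δ > (0:ℝ),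
      ∀ (t s : unitInterval) (u : ℝ), dist t s ≤ δ → |u - u₀| < ε →
        |margF P t u - margF P s u| ≤ η) (u : ℝ) :
    UniformContinuous fun t => P.real {x : FSp | x t < u} := by
  obtain ⟨ε, hε, hmod⟩ := hequi u
  refine Metric.uniformContinuous_iff_le.mpr fun η hη => ?_
  obtain ⟨δ, hδ, hδmod⟩ := hmod η hη
  refine ⟨δ, hδ, fun t s hts => ?_⟩
  have hnear : ∀ᶠ m : ℕ in atTop, |u - 1 / ((m : ℝ) + 1) - u| < ε := by
    filter_upwards [tendsto_one_div_add_atTop_nhds_zero_nat.eventually (gt_mem_nhds hε)] with m hm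
    rwa [sub_sub_cancel_left, abs_neg, abs_of_pos Nat.one_div_pos_of_nat]
  rw [Real.dist_eq]
  exact le_of_tendsto ((tendsto_measureReal_le_sub_one_div P (fun x : FSp => x t) u).sub
    (tendsto_measureReal_le_sub_one_div P (fun x : FSp => x s) u)).abs
    (hnear.mono fun m hm => hδmod t s _ hts hm)

theorem uniformContinuous_measureReal_dmin_le [IsProbabilityMeasure P]
    (hP : ∀ c, P {x : FSp | dmin P x = c} = 0) :
    UniformContinuous fun y => P.real {x : FSp | dmin P x ≤ y} := by
  have hd := measurable_dmin P
  have := Measure.isProbabilityMeasure_map (μ := P) hd.aemeasurable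
  have : NullSingletonClass (P.map fun x : FSp => dmin P x) :=
    ⟨fun c => by rw [Measure.map_apply hd (measurableSet_singleton c)]; exact hP c⟩
  have hcdf : (fun y => P.real {x : FSp | dmin P x ≤ y}) =
      ProbabilityTheory.cdf (P.map fun x : FSp => dmin P x) := funext fun y => by
    rw [ProbabilityTheory.cdf_eq_real, map_measureReal_apply hd measurableSet_Iic]; rfl
  have hzero : ∀ y ≤ 0, P.real {x : FSp | dmin P x ≤ y} = 0 := fun y hy =>
    (measureReal_eq_zero_iff).mpr <| measure_mono_null (fun x (hx : dmin P x ≤ y) =>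
      show dmin P x = 0 from le_antisymm (hx.trans hy) (dmin_nonneg P x)) (hP 0)
  have hone : ∀ y, 1 ≤ y → P.real {x : FSp | dmin P x ≤ y} = 1 := fun y hy => by
    have huniv : {x : FSp | dmin P x ≤ y} = univ :=
      eq_univ_of_forall fun x => (dmin_le_one P x).trans hy
    rw [huniv, probReal_univ]
  have hcont : Continuous fun y => P.real {x : FSp | dmin P x ≤ y} :=
    hcdf ▸ ProbabilityTheory.continuous_cdf _
  exact hcont.uniformContinuous_of_const_off_Icc zero_le_one
    (fun y hy => by rw [hzero y hy, hzero 0 le_rfl]) (fun y hy => by rw [hone y hy, hone 1 le_rfl])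

end Marginals

section Events

variable {Ω : Type*} [MeasurableSpace Ω] {μ : Measure Ω}

theorem exists_events_halfspaceClose {P : Measure FSp} [IsFiniteMeasure P]
    {X : ℕ → Ω → FSp}
    (hGC : ∀ᵐ ω ∂μ, ∀ η > (0:ℝ), ∃ N : ℕ, ∀ n ≥ N, ∀ A : Set FSp,
      Convex ℝ A → MeasurableSet A →
        |(empiricalMeasure (X · ω) n A).toReal - (P A).toReal| ≤ η)
    (hX : ∀ k, Measurable (X k))
    (hgt : ∀ u, Continuous fun t => P.real {x : FSp | u < x t})
    (hlt : ∀ u, Continuous fun t => P.real {x : FSp | x t < u}) {η : ℝ} (hη : 0 < η) :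
    ∃ A : ℕ → Set Ω, (∀ n, MeasurableSet (A n)) ∧ (∀ᵐ ω ∂μ, ∀ᶠ n in atTop, ω ∈ A n) ∧
      ∀ n, ∀ ω ∈ A n, HalfspaceClose (empiricalMeasure (X · ω) n) P η := by
  set d := TopologicalSpace.denseSeq unitInterval
  have hgt_meas : ∀ t (u : ℝ), MeasurableSet {x : FSp | u < x t} := fun t _ =>
    measurableSet_lt measurable_const (continuous_eval_const t).measurable
  have hlt_meas : ∀ t (u : ℝ), MeasurableSet {x : FSp | x t < u} := fun t _ =>
    measurableSet_lt (continuous_eval_const t).measurable measurable_const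
  refine ⟨fun n => {ω | ∀ (i : ℕ) (q : ℚ),
      |(empiricalMeasure (X · ω) n).real {x : FSp | q < x (d i)} -
        P.real {x : FSp | q < x (d i)}| ≤ η ∧
      |(empiricalMeasure (X · ω) n).real {x : FSp | x (d i) < q} -
        P.real {x : FSp | x (d i) < q}| ≤ η},
    fun n => ?_, ?_, fun n ω hω t u => ⟨?_, ?_⟩⟩
  · have hm : ∀ S, MeasurableSet S → Measurable fun ω =>
        |(empiricalMeasure (X · ω) n).real S - P.real S| :=
      fun S hS => ((measurable_empiricalMeasure_real_apply hX n hS).sub_const _).abs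
    exact measurableSet_setOfPred.mpr <| Measurable.forall fun i => Measurable.forall fun q =>
      (measurableSet_setOfPred.mp (measurableSet_le (hm _ (hgt_meas _ _)) measurable_const)).and
      (measurableSet_setOfPred.mp (measurableSet_le (hm _ (hlt_meas _ _)) measurable_const))
  · filter_upwards [hGC] with ω hω
    obtain ⟨N, hN⟩ := hω η hη
    exact eventually_atTop.mpr ⟨N, fun n hn i q =>
      ⟨hN n hn _ (convex_halfSpace_gt ⟨fun _ _ => rfl, fun _ _ => rfl⟩ _) (hgt_meas _ _),
        hN n hn _ (convex_halfSpace_lt ⟨fun _ _ => rfl, fun _ _ => rfl⟩ _) (hlt_meas _ _)⟩⟩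
  · exact abs_empiricalMeasure_real_sub_le_of_dense (Φ := fun t (x : FSp) => x t)
      (fun t => (continuous_eval_const t).measurable) (fun x => x.continuous) hgt
      (TopologicalSpace.denseRange_denseSeq _) (by rintro _ ⟨i, rfl⟩ q; exact (hω i q).1) t u
  · -- the sets `{x(t) < u}` are the sets `{-x(t) > -u}`
    have := abs_empiricalMeasure_real_sub_le_of_dense (Φ := fun t (x : FSp) => -x t)
      (fun t => (continuous_eval_const t).measurable.neg) (fun x => x.continuous.neg)
      (fun u => by simpa only [lt_neg] using hlt (-u)) (TopologicalSpace.denseRange_denseSeq _)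
      (by rintro _ ⟨i, rfl⟩ q; simpa only [lt_neg, Rat.cast_neg] using (hω i (-q)).2) t (-u)
    simpa only [lt_neg, neg_neg] using this

theorem exists_events_abs_empiricalMeasure_real_sub_le_on_grid [IsProbabilityMeasure μ]
    {E : Type*} [MeasurableSpace E] {P : Measure E} [IsProbabilityMeasure P] {X : ℕ → Ω → E}
    (hX : ∀ k, Measurable (X k)) (hlaw : ∀ k, μ.map (X k) = P)
    (hindep : Pairwise fun i j => ProbabilityTheory.IndepFun (X i) (X j) μ)
    {φ : E → ℝ} (hφ : Measurable φ) (hφ01 : ∀ e, φ e ∈ Icc (0:ℝ) 1)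
    {h τ : ℝ} (hh : 0 < h) (hτ : 0 < τ) :
    ∃ B : ℕ → Set Ω, (∀ n, MeasurableSet (B n)) ∧ (∀ᵐ ω ∂μ, ∀ᶠ n in atTop, ω ∈ B n) ∧
      ∀ n ≠ 0, ∀ ω ∈ B n, ∀ i : ℤ,
        |(empiricalMeasure (X · ω) n).real {e | φ e ≤ i * h} - P.real {e | φ e ≤ i * h}| ≤ τ := by
  have hS : ∀ i : ℤ, MeasurableSet {e | φ e ≤ i * h} := fun _ =>
    measurableSet_le hφ measurable_const
  -- only the levels `i * h ∈ [0, 1]` matter: below the sets are empty, above they are everything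
  refine ⟨fun n => {ω | ∀ i ∈ Finset.Icc (0:ℤ) ⌈h⁻¹⌉,
    |(empiricalMeasure (X · ω) n).real {e | φ e ≤ i * h} - P.real {e | φ e ≤ i * h}| ≤ τ},
    fun n => ?_, ?_, fun n hn ω hω i => ?_⟩
  · exact measurableSet_setOfPred.mpr <| Measurable.forall fun i => Measurable.forall fun _ =>
      measurableSet_setOfPred.mp (measurableSet_le
        ((measurable_empiricalMeasure_real_apply hX n (hS i)).sub_const _).abs measurable_const)
  · filter_upwards [ae_all_iff.mpr fun i => ae_tendsto_empiricalMeasure_real hX hlaw hindep (hS i)]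
      with ω hω
    refine (Finset.Icc _ _).eventually_all.mpr fun i _ =>
      ((hω i).eventually (Metric.closedBall_mem_nhds _ hτ)).mono fun n hn => ?_
    rwa [Real.dist_eq] at hn
  · have := isProbabilityMeasure_empiricalMeasure (X · ω) hn
    by_cases hi : i ∈ Finset.Icc (0:ℤ) ⌈h⁻¹⌉
    · exact hω i hi
    rw [Finset.mem_Icc, not_and_or, not_le, not_le] at hi
    rcases hi with hi | hi
    · have hempty : {e | φ e ≤ i * h} = ∅ := eq_empty_of_forall_notMem fun e he =>
        (hφ01 e).1.not_gt (lt_of_le_of_lt he (mul_neg_of_neg_of_pos (by exact_mod_cast hi) hh))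
      simp [hempty, hτ.le]
    · have hih : 1 ≤ (i : ℝ) * h := by
        have := mul_le_mul_of_nonneg_right
          ((Int.le_ceil h⁻¹).trans (by exact_mod_cast hi.le : (⌈h⁻¹⌉ : ℝ) ≤ i)) hh.le
        rwa [inv_mul_cancel₀ hh.ne'] at this
      have huniv : {e | φ e ≤ i * h} = univ := eq_univ_of_forall fun e => (hφ01 e).2.trans hih
      simp [huniv, hτ.le]

theorem ae_ne_of_ae_encard_crossings_ne_top {X : ℕ → Ω → FSp}
    (h : ∀ᵐ ω ∂μ, {t : unitInterval | ∃ i j, i < j ∧ j < 2 ∧ X i ω t = X j ω t}.encard ≠ ⊤) :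
    ∀ᵐ ω ∂μ, X 0 ω ≠ X 1 ω := by
  filter_upwards [h] with ω hfin heq
  refine hfin (Set.encard_eq_top_iff.mpr ?_)
  have hinf : (univ : Set unitInterval).Infinite :=
    Set.infinite_univ_iff.mpr (Set.infinite_coe_iff.mpr (Set.Icc_infinite zero_lt_one))
  exact hinf.mono fun t _ => ⟨0, 1, zero_lt_one, one_lt_two, by rw [heq]⟩

end Events

theorem sample_ED_uniform_convergence_general
    (P : Measure FSp) [IsProbabilityMeasure P]
    {Ω' : Type} [MeasurableSpace Ω'] (ℙ : Measure Ω') [IsProbabilityMeasure ℙ]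
    (X : ℕ → Ω' → FSp) (hXmeas : ∀ k, Measurable (X k))
    (hXlaw : ∀ k, ℙ.map (X k) = P)
    (hXindep : ProbabilityTheory.iIndepFun X ℙ)
    (Pn : ℕ → Ω' → Measure FSp)
    (hPn : ∀ n ω, Pn n ω =
      (n : ℝ≥0∞)⁻¹ • ∑ k ∈ Finset.range n, Measure.dirac (X k ω))
    (Cn : ℕ → Ω' → ℕ∞)
    (hCn : ∀ n ω, Cn n ω =
      {t : unitInterval | ∃ i j, i < j ∧ j < n ∧ X i ω t = X j ω t}.encard)
    (hCnfin : ∀ n, ∀ᵐ ω ∂ℙ, Cn n ω ≠ ⊤)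
    (hdeg1 : (P.prod P) {p : FSp × FSp | dmin P ⇑p.1 = dmin P ⇑p.2 ∧ p.1 ≠ p.2} = 0)
    (hequi : ∀ u₀ : ℝ, ∃ ε > (0:ℝ), ∀ η > (0:ℝ), ∃ δ > (0:ℝ),
      ∀ (t s : unitInterval) (u : ℝ), dist t s ≤ δ → |u - u₀| < ε →
        |margF P t u - margF P s u| ≤ η)
    (hGC : ∀ᵐ ω ∂ℙ, ∀ η > (0:ℝ), ∃ N : ℕ, ∀ n ≥ N, ∀ A : Set FSp,
      Convex ℝ A → MeasurableSet A →
        |(Pn n ω A).toReal - (P A).toReal| ≤ η) :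
    ∀ ε > (0:ℝ), Tendsto
      (fun n : ℕ => ℙ {ω | ∃ f : FSp, ε < |ed (Pn n ω) ⇑f - ed P ⇑f|})
      atTop (nhds 0) := by
  intro ε hε
  obtain rfl : Pn = fun n ω => empiricalMeasure (X · ω) n := funext₂ hPn
  have hne := ae_ne_of_ae_encard_crossings_ne_top ((hCnfin 2).mono fun ω hω => hCn 2 ω ▸ hω)
  have hP : ∀ c, P {x : FSp | dmin P x = c} = 0 :=
    measure_preimage_singleton_eq_zero_of_prod (fun x : FSp => dmin P x)
      (prod_diagonal_eq_zero_of_ae_ne (hXmeas 0) (hXmeas 1) (hXlaw 0) (hXlaw 1)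
        (hXindep.indepFun zero_ne_one) hne) hdeg1
  obtain ⟨h, hh, hosc⟩ := Metric.uniformContinuous_iff_le.mp
    (uniformContinuous_measureReal_dmin_le hP) (ε / 4) (by positivity)
  obtain ⟨A, hAm, hAae, hA⟩ := exists_events_halfspaceClose hGC hXmeas
    (fun u => (uniformContinuous_measureReal_lt_eval hequi u).continuous)
    (fun u => (uniformContinuous_measureReal_eval_lt hequi u).continuous)
    (by positivity : 0 < h / 6)
  obtain ⟨B, hBm, hBae, hB⟩ := exists_events_abs_empiricalMeasure_real_sub_le_on_grid hXmeas hXlaw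
    (fun i j hij => hXindep.indepFun hij) (measurable_dmin P)
    (fun x => ⟨dmin_nonneg P x, dmin_le_one P x⟩) hh (by positivity : 0 < ε / 4)
  refine tendsto_of_tendsto_of_tendsto_of_le_of_le' tendsto_const_nhds
    (tendsto_measure_of_ae_eventually_notMem (μ := ℙ) (A := fun n => (A n ∩ B n)ᶜ)
      (fun n => ((hAm n).inter (hBm n)).compl) ?_) (.of_forall fun _ => bot_le) ?_
  · filter_upwards [hAae, hBae] with ω hωA hωB
    exact (hωA.and hωB).mono fun n hn hn' => hn' hn
  · filter_upwards [eventually_ne_atTop 0] with n hn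
    refine measure_mono fun ω ⟨f, hf⟩ hω => ?_
    have := isProbabilityMeasure_empiricalMeasure (X · ω) hn
    have hed := abs_ed_sub_ed_le hP (by positivity) (by linarith)
      (hA n ω hω.1).abs_dmin_sub_le hosc (hB n hn ω hω.2) f
    linarith

/-- **Proposition 2 (uniform convergence of sample extremal depth).**
Under non-degeneracy, crossing, equicontinuity and Glivenko–Cantelli-type
conditions, `sup_f |ED(f, P_n) - ED(f, P)| → 0` in outer probability. -/
theorem sample_ED_uniform_convergence
    (P : Measure FSp) [IsProbabilityMeasure P]
    {Ω' : Type} [MeasurableSpace Ω'] (ℙ : Measure Ω') [IsProbabilityMeasure ℙ]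
    (X : ℕ → Ω' → FSp) (hXmeas : ∀ k, Measurable (X k))
    (hXlaw : ∀ k, ℙ.map (X k) = P)
    (hXindep : ProbabilityTheory.iIndepFun X ℙ)
    (Pn : ℕ → Ω' → Measure FSp)
    (hPn : ∀ n ω, Pn n ω =
      (n : ℝ≥0∞)⁻¹ • ∑ k ∈ Finset.range n, Measure.dirac (X k ω))
    (Cn : ℕ → Ω' → ℕ∞)
    (hCn : ∀ n ω, Cn n ω =
      {t : unitInterval | ∃ i j, i < j ∧ j < n ∧ X i ω t = X j ω t}.encard)
    (hCnfin : ∀ n, ∀ᵐ ω ∂ℙ, Cn n ω ≠ ⊤)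
    (hcross : ∀ ε > (0:ℝ), Tendsto
      (fun n : ℕ => ℙ {ω | ENNReal.ofReal (Real.exp (ε * n)) ≤ (Cn n ω : ℝ≥0∞)})
      atTop (nhds 0))
    (hdeg0 : P {x : FSp | dmin P ⇑x = 0} = 0)
    (hdeg1 : (P.prod P) {p : FSp × FSp | dmin P ⇑p.1 = dmin P ⇑p.2 ∧ p.1 ≠ p.2} = 0)
    (hequi : ∀ u₀ : ℝ, ∃ ε > (0:ℝ), ∀ η > (0:ℝ), ∃ δ > (0:ℝ),
      ∀ (t s : unitInterval) (u : ℝ), dist t s ≤ δ → |u - u₀| < ε →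
        |margF P t u - margF P s u| ≤ η)
    (hGC : ∀ᵐ ω ∂ℙ, ∀ η > (0:ℝ), ∃ N : ℕ, ∀ n ≥ N, ∀ A : Set FSp,
      Convex ℝ A → MeasurableSet A →
        |(Pn n ω A).toReal - (P A).toReal| ≤ η) :
    ∀ ε > (0:ℝ), Tendsto
      (fun n : ℕ => ℙ {ω | ∃ f : FSp, ε < |ed (Pn n ω) ⇑f - ed P ⇑f|})
      atTop (nhds 0) :=
  sample_ED_uniform_convergence_general P ℙ X hXmeas hXlaw hXindep Pn hPn Cn hCn hCnfin hdeg1 hequi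
    hGC
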